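/- arXiv:1011.0357 — 2 statements merged into one kernel-verified Lean document; each statement's English description precedes it below -/
import Mathlib

section
/- For positive integers u and v, the number of elements of order exactly u in the group ℤ/uℤ × ℤ/vℤ equals u · gcd(u,v) · Π_{ℓ prime, ℓ | u/gcd(u,v)} (1 − 1/ℓ) · Π_{ℓ prime, ℓ | u, ℓ ∤ u/gcd(u,v)} (1 − 1/ℓ²). -/
/-!
The `d`-torsion of `ℤ/u × ℤ/v` has `gcd(d, u) · gcd(d, v)` elements, so Möbius inversion over
the orders of elements counts those of order exactly `u` as `(μ ∗ g)(u)`, where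
`g(d) = d · gcd(d, v)` for `d ∣ u`. Both `g` and `μ ∗ g` are multiplicative. At a prime power
`p^a ∥ u`, with `c = v_p(v)`, the local factor `g(p^a) - g(p^(a-1))` equals `g(p^a)(1 - 1/p)` when
`c < a` and `g(p^a)(1 - 1/p²)` when `c ≥ a`; and `c < a` holds exactly when `p ∣ u / gcd(u, v)`.
-/

open Finset ArithmeticFunction
open scoped ArithmeticFunction.Moebius ArithmeticFunction.zeta

theorem card_addOrderOf_eq_sum_moebius_mul {G R : Type*} [AddMonoid G] [Fintype G]
    [DecidableEq G] [NonAssocRing R] {n : ℕ} (hn : n ≠ 0) :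
    (#{x : G | addOrderOf x = n} : R) =
      ∑ d ∈ n.divisorsAntidiagonal, (μ d.1 : R) * #{x : G | d.2 • x = 0} := by
  refine (sum_eq_iff_sum_mul_moebius_eq (f := fun m => (#{x : G | addOrderOf x = m} : R))
    (g := fun m => (#{x : G | m • x = 0} : R)) |>.mp (fun m hm => ?_) n
    (Nat.pos_of_ne_zero hn)).symm
  rw [← sum_card_addOrderOf_eq_card_nsmul_eq_zero hm.ne', Nat.cast_sum]

theorem IsAddCyclic.card_nsmul_eq_zero_eq_gcd {A : Type*} [AddCommGroup A] [IsAddCyclic A]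
    [Fintype A] [DecidableEq A] (d : ℕ) : #{x : A | d • x = 0} = (Fintype.card A).gcd d := by
  rw [← Fintype.card_subtype, ← Nat.card_eq_fintype_card, ← Nat.card_eq_fintype_card,
    ← IsAddCyclic.card_nsmulAddMonoidHom_ker]
  rfl

theorem card_nsmul_eq_zero_prod {A B : Type*} [AddMonoid A] [AddMonoid B] [Fintype A] [Fintype B]
    [DecidableEq A] [DecidableEq B] (d : ℕ) :
    #{x : A × B | d • x = 0} = #{a : A | d • a = 0} * #{b : B | d • b = 0} := by
  rw [← card_product, ← filter_product, ← univ_product_univ]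
  simp only [Prod.ext_iff, Prod.smul_fst, Prod.smul_snd, Prod.fst_zero, Prod.snd_zero]

theorem ZMod.card_nsmul_eq_zero_prod_of_dvd {u v d : ℕ} [NeZero u] [NeZero v] (hd : d ∣ u) :
    #{x : ZMod u × ZMod v | d • x = 0} = d * d.gcd v := by
  rw [card_nsmul_eq_zero_prod, IsAddCyclic.card_nsmul_eq_zero_eq_gcd,
    IsAddCyclic.card_nsmul_eq_zero_eq_gcd, ZMod.card, ZMod.card, Nat.gcd_eq_right hd, Nat.gcd_comm]

theorem ArithmeticFunction.moebius_mul_apply_prime_pow_succ {R : Type*} [Ring R]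
    (f : ArithmeticFunction R) {p : ℕ} (hp : p.Prime) (k : ℕ) :
    ((μ : ArithmeticFunction R) * f) (p ^ (k + 1)) = f (p ^ (k + 1)) - f (p ^ k) := by
  have hsum (n : ℕ) :
      f (p ^ n) = ∑ i ∈ range (n + 1), ((μ : ArithmeticFunction R) * f) (p ^ i) := by
    rw [← Nat.sum_divisors_prime_pow hp, ← coe_zeta_mul_apply, ← mul_assoc,
      coe_zeta_mul_coe_moebius, one_mul]
  rw [hsum (k + 1), hsum k, sum_range_succ, add_sub_cancel_left]

theorem Nat.Prime.pow_gcd_eq_pow_min {p : ℕ} (hp : p.Prime) (a : ℕ) {v : ℕ} (hv : v ≠ 0) :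
    (p ^ a).gcd v = p ^ min a (v.factorization p) := by
  obtain ⟨k, -, hk⟩ := (Nat.dvd_prime_pow hp).mp (Nat.gcd_dvd_left (p ^ a) v)
  have hfac := congrArg (·.factorization p) hk
  simp only [Nat.factorization_gcd (pow_ne_zero a hp.ne_zero) hv, Finsupp.inf_apply,
    hp.factorization_pow, Finsupp.single_eq_same] at hfac
  rw [hk, hfac]

def mulGcd (v : ℕ) : ArithmeticFunction ℚ :=
  ⟨fun n => n * n.gcd v, by simp⟩

theorem mulGcd_apply (v n : ℕ) : mulGcd v n = n * n.gcd v := rfl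

theorem isMultiplicative_mulGcd (v : ℕ) : (mulGcd v).IsMultiplicative := by
  refine ⟨by simp [mulGcd_apply], fun {m n} hmn => ?_⟩
  simp only [mulGcd_apply, Nat.gcd_comm _ v, Nat.Coprime.gcd_mul v hmn]
  push_cast
  ring

theorem mulGcd_apply_prime_pow {p : ℕ} (hp : p.Prime) (a : ℕ) {v : ℕ} (hv : v ≠ 0) :
    mulGcd v (p ^ a) = (p : ℚ) ^ (a + min a (v.factorization p)) := by
  rw [mulGcd_apply, hp.pow_gcd_eq_pow_min a hv]
  push_cast
  ring

theorem moebius_mul_mulGcd_apply_prime_pow {p : ℕ} (hp : p.Prime) {a : ℕ} (ha : a ≠ 0) {v : ℕ}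
    (hv : v ≠ 0) :
    ((μ : ArithmeticFunction ℚ) * mulGcd v) (p ^ a) = mulGcd v (p ^ a) *
      if v.factorization p < a then 1 - 1 / (p : ℚ) else 1 - 1 / (p : ℚ) ^ 2 := by
  obtain ⟨k, rfl⟩ := Nat.exists_eq_add_one_of_ne_zero ha
  have hp0 : (p : ℚ) ≠ 0 := Nat.cast_ne_zero.mpr hp.ne_zero
  rw [moebius_mul_apply_prime_pow_succ _ hp, mulGcd_apply_prime_pow hp _ hv,
    mulGcd_apply_prime_pow hp _ hv]
  split_ifs with hc
  · rw [min_eq_right hc.le, min_eq_right (Nat.le_of_lt_succ hc)]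
    field_simp
    ring
  · rw [min_eq_left (not_lt.mp hc), min_eq_left (by omega)]
    field_simp
    ring

theorem moebius_mul_mulGcd_apply {u v : ℕ} (hu : u ≠ 0) (hv : v ≠ 0) :
    ((μ : ArithmeticFunction ℚ) * mulGcd v) u = u * u.gcd v *
      ∏ p ∈ u.primeFactors, if v.factorization p < u.factorization p then 1 - 1 / (p : ℚ)
        else 1 - 1 / (p : ℚ) ^ 2 := by
  have hmul := (isMultiplicative_moebius.intCast (R := ℚ)).mul (isMultiplicative_mulGcd v)
  rw [← mulGcd_apply, hmul.multiplicative_factorization _ hu,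
    (isMultiplicative_mulGcd v).multiplicative_factorization _ hu,
    Nat.prod_factorization_eq_prod_primeFactors, Nat.prod_factorization_eq_prod_primeFactors,
    ← prod_mul_distrib]
  refine prod_congr rfl fun p hp => ?_
  have hp' := Nat.prime_of_mem_primeFactors hp
  exact moebius_mul_mulGcd_apply_prime_pow hp'
    (hp'.factorization_pos_of_dvd hu (Nat.dvd_of_mem_primeFactors hp)).ne' hv

theorem ZMod.card_addOrderOf_eq_moebius_mul_mulGcd (u v : ℕ) [NeZero u] [NeZero v] :
    (#{x : ZMod u × ZMod v | addOrderOf x = u} : ℚ) =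
      ((μ : ArithmeticFunction ℚ) * mulGcd v) u := by
  rw [card_addOrderOf_eq_sum_moebius_mul (NeZero.ne u), mul_apply]
  refine sum_congr rfl fun d hd => ?_
  rw [intCoe_apply, mulGcd_apply, ZMod.card_nsmul_eq_zero_prod_of_dvd (Nat.dvd_of_mem_divisors
    (Nat.snd_mem_divisors_of_mem_antidiagonal hd)), Nat.cast_mul]

theorem Nat.Prime.dvd_div_gcd_iff {p u v : ℕ} (hp : p.Prime) (hu : u ≠ 0) (hv : v ≠ 0) :
    p ∣ u / u.gcd v ↔ v.factorization p < u.factorization p := by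
  have hq : u / u.gcd v ≠ 0 :=
    (Nat.div_pos (Nat.gcd_le_left v (Nat.pos_of_ne_zero hu)) (Nat.gcd_pos_of_pos_right u
      (Nat.pos_of_ne_zero hv))).ne'
  rw [hp.dvd_iff_one_le_factorization hq, Nat.factorization_div (Nat.gcd_dvd_left u v),
    Nat.factorization_gcd hu hv, Finsupp.tsub_apply, Finsupp.inf_apply]
  omega

/-- For positive `u, v`, the number of elements of order exactly `u` in
`ℤ/uℤ × ℤ/vℤ` is `u · gcd(u,v) · ∏_{ℓ ∣ u/gcd(u,v)} (1 − 1/ℓ) · ∏_{ℓ ∣ u, ℓ ∤ u/gcd(u,v)} (1 − 1/ℓ²)`. -/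
theorem stmt_5 (u v : ℕ) (hu : 0 < u) (hv : 0 < v) :
    (Nat.card {x : ZMod u × ZMod v | addOrderOf x = u} : ℚ) =
      (u : ℚ) * (Nat.gcd u v : ℚ) *
        (∏ ℓ ∈ (u / Nat.gcd u v).primeFactors, (1 - 1 / (ℓ : ℚ))) *
        (∏ ℓ ∈ u.primeFactors.filter (fun ℓ => ¬ ℓ ∣ u / Nat.gcd u v),
          (1 - 1 / (ℓ : ℚ) ^ 2)) := by
  have : NeZero u := ⟨hu.ne'⟩
  have : NeZero v := ⟨hv.ne'⟩
  have hdvd_iff (p : ℕ) (hp : p ∈ u.primeFactors) :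
      p ∣ u / u.gcd v ↔ v.factorization p < u.factorization p :=
    (Nat.prime_of_mem_primeFactors hp).dvd_div_gcd_iff hu.ne' hv.ne'
  rw [Nat.card_eq_card_toFinset, Set.toFinset_ofPred, ZMod.card_addOrderOf_eq_moebius_mul_mulGcd,
    moebius_mul_mulGcd_apply hu.ne' hv.ne', prod_ite, ← mul_assoc,
    ← Nat.primeFactors_filter_dvd_of_dvd hu.ne' (Nat.div_dvd_of_dvd (Nat.gcd_dvd_left u v)),
    filter_congr hdvd_iff, filter_congr fun p hp => (hdvd_iff p hp).not]
end

section
/- Let G = C_d × B be a finite abelian group where C_d is cyclic of order d = ef and B is a finite abelian group. The number of cyclic subgroups H ≅ C_d of G such that H ∩ (C_d × {1}) ≅ C_f equals (e · φ(f) · M) / φ(ef), where M is the number of elements of order exactly e in B. -/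
open AddSubgroup


lemma card_preimage_of_subset_range {G H : Type*} [AddGroup G] [AddGroup H] (ψ : G →+ H)
    (T : Set H) (hT : T ⊆ Set.range ψ) :
    Nat.card (ψ ⁻¹' T) = Nat.card ψ.ker * Nat.card T := by
  classical
  have hs : ∀ t : T, ∃ x, ψ x = t := fun t => hT t.2
  choose s hs using hs
  rw [← Nat.card_prod]
  apply Nat.card_congr
  refine ⟨fun x => (⟨x.1 - s ⟨ψ x.1, x.2⟩, by simp [AddMonoidHom.mem_ker, hs]⟩, ⟨ψ x.1, x.2⟩),
          fun p => ⟨p.1.1 + s p.2, by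
            have h1 : ψ p.1.1 = 0 := p.1.2
            have : ψ (p.1.1 + s p.2) = p.2 := by simp [map_add, h1, hs]
            simpa [Set.mem_preimage, this] using p.2.2⟩, fun x => ?_, fun p => ?_⟩
  · exact Subtype.ext (by simp)
  · obtain ⟨⟨k, hk⟩, t⟩ := p
    have h1 : ψ k = 0 := hk
    have hψ : ψ (k + s t) = (t : H) := by simp [map_add, h1, hs]
    have ht : (⟨ψ (k + s t), by simpa [hψ] using t.2⟩ : T) = t := Subtype.ext hψ
    refine Prod.ext (Subtype.ext ?_) ht
    simp only [ht]
    simp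

lemma card_orderOf_zmod (e f : ℕ) (he : 0 < e) (hf : 0 < f) [NeZero (e*f)] :
    Nat.card {z : ZMod (e*f) | addOrderOf z = f} = f.totient := by
  classical
  rw [Nat.card_eq_fintype_card, Fintype.card_subtype]
  have := IsAddCyclic.card_addOrderOf_eq_totient (α := ZMod (e*f))
    (d := f) (by rw [ZMod.card]; exact ⟨e, mul_comm e f⟩)
  convert this using 2
  ext; simp

lemma countB (e f : ℕ) (he : 0 < e) (hf : 0 < f) [NeZero (e*f)] :
    Nat.card {x : ZMod (e*f) | Nat.lcm (addOrderOf x) e = e * f} = e * f.totient := by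
  classical
  set ψ : ZMod (e*f) →+ ZMod (e*f) := AddMonoidHom.mulLeft (e : ZMod (e*f)) with hψ
  have hset : {x : ZMod (e*f) | Nat.lcm (addOrderOf x) e = e * f}
      = ψ ⁻¹' {z | addOrderOf z = f} := by
    ext x
    have hmul : ψ x = e • x := by simp [hψ, AddMonoidHom.mulLeft, nsmul_eq_mul]
    simp only [Set.mem_setOf_eq, Set.mem_preimage, hmul, addOrderOf_nsmul' x he.ne']
    set m := addOrderOf x with hm
    set g := Nat.gcd m e with hg
    have hgpos : 0 < g := Nat.gcd_pos_of_pos_right m he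
    have key : g * Nat.lcm m e = m * e := Nat.gcd_mul_lcm m e
    constructor
    · intro h
      have h2 : m * e = (g * f) * e := by rw [← key, h]; ring
      have h3 : m = g * f := Nat.eq_of_mul_eq_mul_right he h2
      rw [h3, Nat.mul_div_cancel_left f hgpos]
    · intro h
      have hgm : g ∣ m := Nat.gcd_dvd_left m e
      have h3 : m = g * f := by rw [← h, Nat.mul_div_cancel' hgm]
      have : g * Nat.lcm m e = g * (e * f) := by rw [key, h3]; ring
      exact Nat.eq_of_mul_eq_mul_left hgpos this
  have hsub : {z : ZMod (e*f) | addOrderOf z = f} ⊆ Set.range ψ := by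
    intro z hz
    have hz0 : (f : ℕ) • z = 0 := by
      have := addOrderOf_nsmul_eq_zero z
      rwa [hz] at this
    have hzval : ((z.val : ℕ) : ZMod (e*f)) = z := (ZMod.natCast_val z).trans (ZMod.cast_id _ _)
    have h1 : ((f * z.val : ℕ) : ZMod (e*f)) = 0 := by
      push_cast
      rw [hzval] at *
      rw [← nsmul_eq_mul]
      exact hz0
    have h2 : e * f ∣ f * z.val := (ZMod.natCast_eq_zero_iff _ _).mp h1
    obtain ⟨k, hk⟩ := h2
    have h3 : z.val = e * k := by
      have : f * z.val = f * (e * k) := by rw [hk]; ring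
      exact Nat.eq_of_mul_eq_mul_left hf this
    refine ⟨(k : ZMod (e*f)), ?_⟩
    have : ψ (k : ZMod (e*f)) = ((e * k : ℕ) : ZMod (e*f)) := by
      show (e : ZMod (e*f)) * (k : ZMod (e*f)) = _
      push_cast
      ring
    rw [this, ← h3, hzval]
  rw [hset, card_preimage_of_subset_range ψ _ hsub, card_orderOf_zmod e f he hf]
  congr 1
  have hker : ψ.ker = zmultiples ((f : ℕ) : ZMod (e*f)) := by
    ext x
    simp only [AddMonoidHom.mem_ker, mem_zmultiples_iff]
    rw [show ψ x = (e : ZMod (e*f)) * x from rfl]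
    constructor
    · intro h
      have hzval : ((x.val : ℕ) : ZMod (e*f)) = x := (ZMod.natCast_val x).trans (ZMod.cast_id _ _)
      have h1 : ((e * x.val : ℕ) : ZMod (e*f)) = 0 := by push_cast; rw [hzval]; exact h
      have h2 : e * f ∣ e * x.val := (ZMod.natCast_eq_zero_iff _ _).mp h1
      have h3 : f ∣ x.val := by
        obtain ⟨k, hk⟩ := h2
        exact ⟨k, Nat.eq_of_mul_eq_mul_left he (by rw [hk]; ring)⟩
      refine ⟨(x.val / f : ℕ), ?_⟩
      have : ((x.val / f : ℕ) : ℤ) • ((f : ℕ) : ZMod (e*f)) = ((x.val / f * f : ℕ) : ZMod (e*f)) := by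
        rw [natCast_zsmul, nsmul_eq_mul, Nat.cast_mul]
      rw [this, Nat.div_mul_cancel h3, hzval]
    · rintro ⟨k, rfl⟩
      show (e : ZMod (e*f)) * (k • ((f:ℕ) : ZMod (e*f))) = 0
      have : (e : ZMod (e*f)) * (k • ((f:ℕ) : ZMod (e*f))) = k • ((e:ZMod (e*f)) * (f:ℕ)) := by
        rw [mul_smul_comm]
      rw [this]
      have : (e : ZMod (e*f)) * ((f:ℕ) : ZMod (e*f)) = ((e*f : ℕ) : ZMod (e*f)) := by push_cast; ring
      rw [this, ZMod.natCast_self, smul_zero]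
  rw [hker, Nat.card_zmultiples, ZMod.addOrderOf_coe f (NeZero.ne (e*f))]
  rw [Nat.gcd_eq_right ⟨e, mul_comm e f⟩, Nat.mul_div_assoc e dvd_rfl, Nat.div_self hf, mul_one]

lemma cyc_zmultiples {G : Type*} [AddCommGroup G] (g : G) : IsAddCyclic (zmultiples g) := by
  refine ⟨⟨⟨g, mem_zmultiples g⟩, fun x => ?_⟩⟩
  obtain ⟨⟨x, hx⟩, rfl⟩ : ∃ y : zmultiples g, y = x := ⟨x, rfl⟩
  obtain ⟨k, rfl⟩ := mem_zmultiples_iff.mp hx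
  exact ⟨k, rfl⟩

lemma inter_card_iff {B : Type*} [AddCommGroup B] [Finite B] (e f : ℕ) (he : 0 < e) (hf : 0 < f)
    [NeZero (e*f)] (g : ZMod (e*f) × B) (hg : addOrderOf g = e * f) :
    Nat.card ↥(zmultiples g ⊓ AddSubgroup.prod ⊤ ⊥) = f ↔ addOrderOf g.2 = e := by
  set m := addOrderOf g.2 with hm
  have hmpos : 0 < m := addOrderOf_pos g.2
  have hmd : m ∣ e * f := by
    have h2 : (e*f) • g.2 = 0 := by
      have h := addOrderOf_nsmul_eq_zero g
      rw [hg] at h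
      simpa using congrArg Prod.snd h
    exact addOrderOf_dvd_of_nsmul_eq_zero h2
  have hEq : zmultiples g ⊓ AddSubgroup.prod ⊤ ⊥ = zmultiples (m • g) := by
    ext x
    simp only [AddSubgroup.mem_inf, AddSubgroup.mem_prod, AddSubgroup.mem_top,
      AddSubgroup.mem_bot, true_and, mem_zmultiples_iff]
    constructor
    · rintro ⟨⟨k, rfl⟩, h2⟩
      have h3 : k • g.2 = 0 := by simpa using h2
      obtain ⟨j, rfl⟩ : (m : ℤ) ∣ k := addOrderOf_dvd_iff_zsmul_eq_zero.mpr h3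
      refine ⟨j, ?_⟩
      rw [show ((m:ℤ) * j) = j * (m:ℤ) from mul_comm _ _, mul_smul, natCast_zsmul]
    · rintro ⟨j, rfl⟩
      refine ⟨⟨j * m, by rw [mul_smul, natCast_zsmul]⟩, ?_⟩
      have h4 : (m • g).2 = 0 := by
        rw [Prod.smul_snd]; exact addOrderOf_nsmul_eq_zero g.2
      show (j • m • g).2 = 0
      rw [Prod.smul_snd, Prod.smul_snd] at *
      rw [h4, smul_zero]
  rw [hEq, Nat.card_zmultiples, addOrderOf_nsmul' g hmpos.ne', hg, Nat.gcd_eq_right hmd]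
  constructor
  · intro h
    have h1 : e * f = m * f := by
      conv_lhs => rw [← Nat.div_mul_cancel hmd, h, mul_comm]
    exact (Nat.eq_of_mul_eq_mul_right hf h1).symm
  · intro h
    rw [h, mul_comm, Nat.mul_div_assoc f dvd_rfl, Nat.div_self he, mul_one]

lemma card_cyclic_subgroups_mul {G : Type*} [AddCommGroup G] [Finite G] (d : ℕ) (hd : 0 < d)
    (P : AddSubgroup G → Prop) :
    d.totient * Nat.card {H : AddSubgroup G | IsAddCyclic H ∧ Nat.card H = d ∧ P H}
      = Nat.card {g : G | addOrderOf g = d ∧ P (zmultiples g)} := by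
  classical
  cases nonempty_fintype G
  haveI : Fintype (AddSubgroup G) := Fintype.ofFinite _
  let T : Finset (AddSubgroup G) :=
    Finset.univ.filter (fun H => IsAddCyclic H ∧ Nat.card H = d ∧ P H)
  let S : Finset G := Finset.univ.filter (fun g => addOrderOf g = d ∧ P (zmultiples g))
  have hST : ∀ g ∈ S, zmultiples g ∈ T := by
    intro g hg
    simp only [S, Finset.mem_filter, Finset.mem_univ, true_and] at hg
    simp only [T, Finset.mem_filter, Finset.mem_univ, true_and]
    exact ⟨cyc_zmultiples g, by rw [Nat.card_zmultiples, hg.1], hg.2⟩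
  have hcard : S.card = ∑ H ∈ T, (S.filter (fun g => zmultiples g = H)).card :=
    Finset.card_eq_sum_card_fiberwise hST
  have hfib : ∀ H ∈ T, (S.filter (fun g => zmultiples g = H)).card = d.totient := by
    intro H hH
    simp only [T, Finset.mem_filter, Finset.mem_univ, true_and] at hH
    obtain ⟨hcyc, hcardH, hP⟩ := hH
    have hfil : S.filter (fun g => zmultiples g = H)
        = Finset.univ.filter (fun g => zmultiples g = H) := by
      ext g
      simp only [S, Finset.mem_filter, Finset.mem_univ, true_and, and_iff_right_iff_imp]
      intro hz
      have h1 : addOrderOf g = d := by rw [← Nat.card_zmultiples g, hz, hcardH]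
      exact ⟨h1, by rw [hz]; exact hP⟩
    rw [hfil]
    rw [← Fintype.card_subtype]
    have E : {g : G // zmultiples g = H} ≃ {h : H // addOrderOf h = d} := by
      refine ⟨fun g => ⟨⟨g.1, g.2.le (mem_zmultiples g.1)⟩, ?_⟩, fun h => ⟨(h.1 : G), ?_⟩, ?_, ?_⟩
      · rw [AddSubgroup.addOrderOf_mk, ← Nat.card_zmultiples g.1, g.2, hcardH]
      · refine AddSubgroup.eq_of_le_of_card_ge (zmultiples_le_of_mem h.1.2) ?_
        rw [Nat.card_zmultiples, AddSubgroup.addOrderOf_coe, h.2, hcardH]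
      · intro g; exact Subtype.ext rfl
      · intro h; exact Subtype.ext (Subtype.ext rfl)
    rw [Fintype.card_congr E, Fintype.card_subtype]
    have hd' : d ∣ Fintype.card H := by
      rw [← Nat.card_eq_fintype_card, hcardH]
    haveI : IsAddCyclic H := hcyc
    exact IsAddCyclic.card_addOrderOf_eq_totient hd'
  have hsum : S.card = T.card * d.totient := by
    rw [hcard, Finset.sum_congr rfl hfib, Finset.sum_const, smul_eq_mul]
  have hS : Nat.card {g : G | addOrderOf g = d ∧ P (zmultiples g)} = S.card := by
    rw [Nat.card_eq_fintype_card, Fintype.card_subtype]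
    rfl
  have hT : Nat.card {H : AddSubgroup G | IsAddCyclic H ∧ Nat.card H = d ∧ P H} = T.card := by
    rw [Nat.card_eq_fintype_card, Fintype.card_subtype]
    rfl
  rw [hS, hT, hsum, mul_comm]

/-- In `G = ℤ/dℤ × B` with `d = ef` and `B` finite abelian, the number of cyclic
subgroups `H` of order `d` with `H ∩ (ℤ/dℤ × 0)` of order `f` is `e·φ(f)·M / φ(ef)`, where
`M` is the number of elements of order exactly `e` in `B` (stated multiplied through by `φ(ef)`). -/
theorem stmt_7 (e f : ℕ) (he : 0 < e) (hf : 0 < f) {B : Type*} [AddCommGroup B]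
    [Finite B] :
    (e * f).totient * Nat.card {H : AddSubgroup (ZMod (e * f) × B) |
        IsAddCyclic H ∧ Nat.card H = e * f ∧
        Nat.card ↥(H ⊓ AddSubgroup.prod ⊤ ⊥) = f} =
      e * f.totient * Nat.card {y : B | addOrderOf y = e} := by
  haveI : NeZero (e * f) := ⟨(Nat.mul_pos he hf).ne'⟩
  have key := card_cyclic_subgroups_mul (G := ZMod (e*f) × B) (e * f) (Nat.mul_pos he hf)
    (fun H => Nat.card ↥(H ⊓ AddSubgroup.prod ⊤ ⊥) = f)
  beta_reduce at key
  rw [key]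
  have hset : {g : ZMod (e*f) × B | addOrderOf g = e*f ∧
        Nat.card ↥(zmultiples g ⊓ AddSubgroup.prod ⊤ ⊥) = f}
      = {g : ZMod (e*f) × B | Nat.lcm (addOrderOf g.1) e = e*f ∧ addOrderOf g.2 = e} := by
    ext g
    simp only [Set.mem_setOf_eq]
    constructor
    · rintro ⟨h1, h2⟩
      have h3 := (inter_card_iff e f he hf g h1).mp h2
      refine ⟨?_, h3⟩
      calc Nat.lcm (addOrderOf g.1) e = Nat.lcm (addOrderOf g.1) (addOrderOf g.2) := by rw [h3]
        _ = addOrderOf g := (Prod.addOrderOf g).symm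
        _ = e * f := h1
    · rintro ⟨h1, h2⟩
      have hord : addOrderOf g = e * f := by rw [Prod.addOrderOf, h2, h1]
      exact ⟨hord, (inter_card_iff e f he hf g hord).mpr h2⟩
  rw [hset]
  have hprod : Nat.card {g : ZMod (e*f) × B |
        Nat.lcm (addOrderOf g.1) e = e*f ∧ addOrderOf g.2 = e}
      = Nat.card {x : ZMod (e*f) | Nat.lcm (addOrderOf x) e = e*f}
        * Nat.card {y : B | addOrderOf y = e} := by
    rw [← Nat.card_prod]
    exact Nat.card_congr (Equiv.subtypeProdEquivProd
      (p := fun x : ZMod (e*f) => Nat.lcm (addOrderOf x) e = e*f)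
      (q := fun y : B => addOrderOf y = e))
  rw [hprod, countB e f he hf, mul_assoc]
end
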